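/- Resource state of a CQCA with T(Z_i) = Z_i (the case excluded in Theorem 3, yielding GHZ-type correlations): let N ≥ 3, D ≥ 1, T̃_c := ∏_{i=1}^{N} CZ_{i,i+1} on a ring of N qubits, and arrange N(D+1) qubits in columns j = 1,…,D+1, each column a ring of N qubits. Then the state |Ψ⟩ := (∏_{j=D,…,1} U_{T̃_c}^{(j,j+1)}) |+⟩^{⊗N(D+1)}, where U_{T̃_c}^{(j,j+1)} is the unitary U_T with T = T̃_c acting on columns j (as input) and j+1 (as output), applied from right to left in order j = 1,…,D, is a +1 eigenvector of Z_i^{(j)} Z_i^{(j+1)} for every i = 1,…,N and every j = 1,…,D. -/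

import Mathlib

open Matrix Complex
open scoped Kronecker Classical

noncomputable section

namespace QCA

/-- Computational-basis index set of an `N`-qubit register. -/
abbrev QIdx (N : ℕ) := Fin N → Fin 2

/-- Operators (matrices) on an `N`-qubit register `(ℂ²)^{⊗N}`. -/
abbrev MatQ (N : ℕ) := Matrix (QIdx N) (QIdx N) ℂ

/-- Pauli X. -/
def Xg : Matrix (Fin 2) (Fin 2) ℂ := !![0, 1; 1, 0]

/-- Pauli Z. -/
def Zg : Matrix (Fin 2) (Fin 2) ℂ := !![1, 0; 0, -1]

/-- Pauli Y = i·X·Z. -/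
def Yg : Matrix (Fin 2) (Fin 2) ℂ := Complex.I • (Xg * Zg)

/-- Hadamard gate. -/
def Hg : Matrix (Fin 2) (Fin 2) ℂ := (Real.sqrt 2 : ℂ)⁻¹ • !![1, 1; 1, -1]

/-- Phase gate S = diag(1, i). -/
def Sg : Matrix (Fin 2) (Fin 2) ℂ := !![1, 0; 0, Complex.I]

/-- √X := H·S·H. -/
def sqrtXg : Matrix (Fin 2) (Fin 2) ℂ := Hg * Sg * Hg

/-- The ket |+⟩ = (|0⟩+|1⟩)/√2. -/
def ketPlus : Fin 2 → ℂ := fun _ => (Real.sqrt 2 : ℂ)⁻¹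

/-- The bra ⟨+|. -/
def braPlus : Fin 2 → ℂ := fun a => star (ketPlus a)

/-- The product state |+⟩^{⊗ι}. -/
def ketPlusAll (ι : Type*) [Fintype ι] : (ι → Fin 2) → ℂ := fun s => ∏ i, ketPlus (s i)

/-- Kronecker product of two vectors. -/
def kronVec {a b : Type*} (v : a → ℂ) (w : b → ℂ) : a × b → ℂ := fun p => v p.1 * w p.2

variable {ι : Type*} [Fintype ι] [DecidableEq ι]

/-- `op1 P i` acts as the one-qubit operator `P` on qubit `i` and as the identity elsewhere. -/
def op1 (P : Matrix (Fin 2) (Fin 2) ℂ) (i : ι) : Matrix (ι → Fin 2) (ι → Fin 2) ℂ :=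
  fun s t => P (s i) (t i) * ∏ j ∈ Finset.univ.erase i, (if s j = t j then (1 : ℂ) else 0)

/-- Controlled-Z gate between qubits `i` and `j` (identity elsewhere). -/
def cz2 (i j : ι) : Matrix (ι → Fin 2) (ι → Fin 2) ℂ :=
  Matrix.diagonal fun s => if s i = 1 ∧ s j = 1 then (-1 : ℂ) else 1

/-- The Z-rotation exp(iθ Z_i) on qubit `i`. -/
def rotZ (θ : ℝ) (i : ι) : Matrix (ι → Fin 2) (ι → Fin 2) ℂ :=
  NormedSpace.exp (((θ : ℂ) * Complex.I) • op1 Zg i)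

/-- The layer ∏_{i=1}^{N} H_i of Hadamards on every site of a ring of `N` qubits. -/
def hadamardLayer (N : ℕ) : MatQ N := (List.ofFn fun i : Fin N => op1 Hg i).prod

/-- The layer ∏_{i=1}^{N} CZ_{i,i+1} of controlled-Z gates on a ring of `N` qubits
(site indices mod `N`; the factors pairwise commute). -/
def czRing (N : ℕ) [NeZero N] : MatQ N := (List.ofFn fun i : Fin N => cz2 i (i + 1)).prod

/-- The layer ∏_{i=1}^{N} (√X)_i on a ring of `N` qubits. -/
def sqrtXLayer (N : ℕ) : MatQ N := (List.ofFn fun i : Fin N => op1 sqrtXg i).prod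

/-- The cluster CQCA T_c = (∏ H_i)·(∏ CZ_{i,i+1}) on a ring of `N` qubits. -/
def Tc (N : ℕ) [NeZero N] : MatQ N := hadamardLayer N * czRing N

/-- The periodic CQCA T̃_c = ∏ CZ_{i,i+1} on a ring of `N` qubits. -/
def Ttc (N : ℕ) [NeZero N] : MatQ N := czRing N

/-- The fractal CQCA T̂_c = (∏ H_i)·(∏ CZ_{i,i+1})·(∏ (√X)_i) on a ring of `N` qubits. -/
def Thc (N : ℕ) [NeZero N] : MatQ N := hadamardLayer N * czRing N * sqrtXLayer N

/-- Controlled-Z between input qubit `i` and output qubit `i` on a doubled register. -/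
def czIO {N : ℕ} (i : Fin N) : Matrix (QIdx N × QIdx N) (QIdx N × QIdx N) ℂ :=
  Matrix.diagonal fun p => if p.1 i = 1 ∧ p.2 i = 1 then (-1 : ℂ) else 1

/-- The unitary U_T = (1 ⊗ T)·(∏_i H_i^{(out)})·(∏_i CZ_{i,i}^{(in,out)}) of Eq. (16). -/
def UT {N : ℕ} (T : MatQ N) : Matrix (QIdx N × QIdx N) (QIdx N × QIdx N) ℂ :=
  ((1 : MatQ N) ⊗ₖ T) *
    (List.ofFn fun i : Fin N => (1 : MatQ N) ⊗ₖ op1 Hg i).prod *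
    (List.ofFn fun i : Fin N => czIO i).prod

/-- Contraction of the input register with the product bra `⊗_i bra i`. -/
def contractIn {N : ℕ} (bra : Fin N → Fin 2 → ℂ) (v : QIdx N × QIdx N → ℂ) : QIdx N → ℂ :=
  fun t => ∑ s : QIdx N, (∏ i, bra i (s i)) * v (s, t)

lemma diagonal_commute {α : Type*} [Fintype α] [DecidableEq α] (d e : α → ℂ) :
    Commute (Matrix.diagonal d) (Matrix.diagonal e) := by
  unfold Commute SemiconjBy
  have h : (fun i => d i * e i) = fun i => e i * d i := by funext x; ring
  rw [Matrix.diagonal_mul_diagonal, Matrix.diagonal_mul_diagonal, h]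

lemma Zg_eq_diagonal : Zg = Matrix.diagonal ![1, -1] := by
  ext i j
  fin_cases i <;> fin_cases j <;> simp [Zg, Matrix.diagonal]

lemma op1_diagonal (d : Fin 2 → ℂ) (i : ι) :
    op1 (Matrix.diagonal d) i = Matrix.diagonal (fun s => d (s i)) := by
  ext s t
  by_cases h : s = t
  · subst h
    simp [op1, Matrix.diagonal_apply_eq]
  · rw [Matrix.diagonal_apply_ne _ h]
    by_cases hi : s i = t i
    · obtain ⟨k, hk⟩ : ∃ k, s k ≠ t k := Function.ne_iff.mp h
      have hki : k ≠ i := by rintro rfl; exact hk hi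
      have h0 : (if s k = t k then (1 : ℂ) else 0) = 0 := by simp [hk]
      unfold op1
      rw [Finset.prod_eq_zero (Finset.mem_erase.mpr ⟨hki, Finset.mem_univ k⟩) h0]
      ring
    · unfold op1
      rw [Matrix.diagonal_apply_ne _ hi]
      ring

/-- The controlled-Z gate attached to an (undirected) edge `e`. -/
def czEdge {N : ℕ} (e : Sym2 (Fin N)) : MatQ N :=
  Matrix.diagonal fun s => if ∀ i ∈ e, s i = 1 then (-1 : ℂ) else 1

/-- The unitary ∏_{{i,j} ∈ E(G)} CZ_{i,j} preparing the graph state (the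
factors pairwise commute, so the product over the edge set is well defined). -/
def graphUnitary {N : ℕ} (G : SimpleGraph (Fin N)) [DecidableRel G.Adj] : MatQ N :=
  G.edgeFinset.noncommProd czEdge (by intro a _ b _ _; exact diagonal_commute _ _)

/-- The graph state |G⟩ = (∏_{{i,j} ∈ E(G)} CZ_{i,j}) |+⟩^{⊗N}. -/
def graphState {N : ℕ} (G : SimpleGraph (Fin N)) [DecidableRel G.Adj] : QIdx N → ℂ :=
  (graphUnitary G).mulVec (ketPlusAll (Fin N))

/-- The stabilizer generator K_v = X_v · ∏_{w ∈ N_G(v)} Z_w of the graph state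
(the Z factors pairwise commute, so the product is well defined). -/
def stabGen {N : ℕ} (G : SimpleGraph (Fin N)) [DecidableRel G.Adj] (v : Fin N) : MatQ N :=
  op1 Xg v *
    (G.neighborFinset v).noncommProd (fun w => op1 Zg w)
      (by
        intro a _ b _ _
        simp only [Function.onFun]
        rw [Zg_eq_diagonal, op1_diagonal, op1_diagonal]
        exact diagonal_commute _ _)


/-- Sites of an `N × (D+1)` grid of qubits: row `i : Fin N`, column `j : Fin (D+1)`. -/
abbrev GIdx (N D : ℕ) := Fin N × Fin (D + 1)

/-- Operators on the grid of `N × (D+1)` qubits. -/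
abbrev MatG (N D : ℕ) := Matrix (GIdx N D → Fin 2) (GIdx N D → Fin 2) ℂ

/-- The periodic CQCA `T̃_c = ∏_i CZ_{i,i+1}` acting on column `j` of the grid. -/
def TtcCol {N D : ℕ} [NeZero N] (j : Fin (D + 1)) : MatG N D :=
  (List.ofFn fun i : Fin N => cz2 ((i, j) : GIdx N D) ((i + 1, j) : GIdx N D)).prod

/-- The unitary `U_{T̃_c}^{(j,j+1)}` acting on columns `j` (input) and `j+1` (output). -/
def UTtcPair {N D : ℕ} [NeZero N] (j : Fin D) : MatG N D :=
  TtcCol j.succ *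
    (List.ofFn fun i : Fin N => op1 Hg ((i, j.succ) : GIdx N D)).prod *
    (List.ofFn fun i : Fin N => cz2 ((i, j.castSucc) : GIdx N D) ((i, j.succ) : GIdx N D)).prod

/-- The resource state `|Ψ⟩ = (∏_{j=D,…,1} U_{T̃_c}^{(j,j+1)}) |+⟩^{⊗N(D+1)}`. -/
def ghzResourceState (N D : ℕ) [NeZero N] : (GIdx N D → Fin 2) → ℂ :=
  ((List.ofFn fun j : Fin D => UTtcPair (N := N) (D := D) j).reverse.prod).mulVec
    (ketPlusAll (GIdx N D))

/- Conjugation through one layer `U^{(j,j+1)}` turns `Z_i^{(j)} Z_i^{(j+1)}` into `X_i^{(j+1)}`: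
the ring layer `T̃_c` is diagonal, the Hadamard on `(i, j+1)` turns `Z_i^{(j+1)}` into
`X_i^{(j+1)}`, and the `CZ` between `(i, j)` and `(i, j+1)` turns `X_i^{(j+1)}` into
`Z_i^{(j)} X_i^{(j+1)}`, cancelling the remaining `Z_i^{(j)}`. Later layers put Hadamards only on
columns beyond `j+1`, so they commute with both `Z`s; earlier layers act only on columns up to `j`,
so they commute with `X_i^{(j+1)}`. Hence `Z_i^{(j)} Z_i^{(j+1)} U = U X_i^{(j+1)}` for the whole
circuit `U`, and `X_i^{(j+1)}` fixes `|+⟩^{⊗N(D+1)}`. -/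

lemma Xg_apply (a b : Fin 2) : Xg a b = if b = a + 1 then 1 else 0 := by
  fin_cases a <;> fin_cases b <;> rfl

lemma Zg_diag_mul_Hg (a b : Fin 2) : Zg a a * Hg a b = Hg a (b + 1) := by
  fin_cases a <;> fin_cases b <;> simp [Zg, Hg]

def flipAt (q : ι) (s : ι → Fin 2) : ι → Fin 2 := Function.update s q (s q + 1)

lemma flipAt_involutive {κ : Type*} [DecidableEq κ] (q : κ) :
    Function.Involutive (flipAt q) := by
  intro s
  have h : s q + 1 + 1 = s q := by generalize s q = a; revert a; decide
  simp [flipAt, h]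

lemma op1_apply (P : Matrix (Fin 2) (Fin 2) ℂ) (q : ι) (s t : ι → Fin 2) :
    op1 P q s t = if ∀ k ≠ q, s k = t k then P (s q) (t q) else 0 := by
  simp only [op1, Finset.prod_boole, Finset.mem_erase, Finset.mem_univ, and_true]
  split_ifs <;> simp

lemma op1_Zg (q : ι) : op1 Zg q = Matrix.diagonal fun s => Zg (s q) (s q) := by
  have hZ : Zg = Matrix.diagonal fun a => Zg a a := by
    ext a b
    fin_cases a <;> fin_cases b <;> rfl
  conv_lhs => rw [hZ]
  exact op1_diagonal _ q

lemma op1_Xg_apply (q : ι) (s t : ι → Fin 2) :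
    op1 Xg q s t = if t = flipAt q s then 1 else 0 := by
  simp only [op1_apply, Xg_apply, flipAt, Function.eq_update_iff, eq_comm (a := t _)]
  split_ifs <;> tauto

lemma op1_Xg_mul_apply (q : ι) (M : Matrix (ι → Fin 2) (ι → Fin 2) ℂ) (s t : ι → Fin 2) :
    (op1 Xg q * M) s t = M (flipAt q s) t := by
  simp [Matrix.mul_apply, op1_Xg_apply]

lemma mul_op1_Xg_apply (q : ι) (M : Matrix (ι → Fin 2) (ι → Fin 2) ℂ) (s t : ι → Fin 2) :
    (M * op1 Xg q) s t = M s (flipAt q t) := by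
  simp [Matrix.mul_apply, op1_Xg_apply, (flipAt_involutive q).eq_iff, eq_comm (a := t)]

lemma op1_Xg_mulVec_ketPlusAll (q : ι) :
    (op1 Xg q).mulVec (ketPlusAll ι) = ketPlusAll ι := by
  ext t
  simp [Matrix.mulVec, dotProduct, op1_Xg_apply, ketPlusAll, ketPlus]

lemma commute_op1_diagonal (P : Matrix (Fin 2) (Fin 2) ℂ) (q : ι) {d : (ι → Fin 2) → ℂ}
    (hd : ∀ s b, d (Function.update s q b) = d s) :
    Commute (op1 P q) (Matrix.diagonal d) := by
  ext s t
  rw [Matrix.mul_diagonal, Matrix.diagonal_mul, op1_apply]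
  split_ifs with hst
  · have hs : s = Function.update t q (s q) := by
      rw [Function.eq_update_iff]
      exact ⟨rfl, hst⟩
    rw [hs, hd, mul_comm]
  · simp

lemma op1_Xg_mul_diagonal (q : ι) (d : (ι → Fin 2) → ℂ) :
    op1 Xg q * Matrix.diagonal d = Matrix.diagonal (d ∘ flipAt q) * op1 Xg q := by
  ext s t
  rw [Matrix.mul_diagonal, Matrix.diagonal_mul, op1_Xg_apply]
  split_ifs with h <;> simp [h]

lemma commute_op1_Xg_op1 (P : Matrix (Fin 2) (Fin 2) ℂ) {q q' : ι} (h : q ≠ q') :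
    Commute (op1 Xg q) (op1 P q') := by
  have hflip : ∀ a b : Fin 2, a + 1 = b ↔ a = b + 1 := by decide
  ext s t
  rw [op1_Xg_mul_apply, mul_op1_Xg_apply, op1_apply, op1_apply]
  simp only [flipAt, Function.update_of_ne h.symm]
  congr 1
  refine propext (forall_congr' fun k => imp_congr_right fun _ => ?_)
  rcases eq_or_ne k q with rfl | hk
  · simpa using hflip _ _
  · simp [Function.update_of_ne hk]

lemma semiconjBy_op1_Hg (q : ι) : SemiconjBy (op1 Hg q) (op1 Xg q) (op1 Zg q) := by
  ext s t
  rw [mul_op1_Xg_apply, op1_Zg, Matrix.diagonal_mul, op1_apply, op1_apply]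
  simp only [flipAt, Function.update_self]
  split_ifs with h1 h2 h2
  · rw [Zg_diag_mul_Hg]
  · exact absurd (fun k hk => (Function.update_of_ne hk _ t).symm ▸ h1 k hk) h2
  · exact absurd (fun k hk => (Function.update_of_ne hk _ t) ▸ h2 k hk) h1
  · simp

lemma commute_op1_Zg_op1 (P : Matrix (Fin 2) (Fin 2) ℂ) {q q' : ι} (h : q ≠ q') :
    Commute (op1 Zg q) (op1 P q') := by
  rw [op1_Zg]
  exact (commute_op1_diagonal P q' fun s b => by rw [Function.update_of_ne h]).symm

lemma commute_op1_Zg_cz2 (q a b : ι) : Commute (op1 Zg q) (cz2 a b) := by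
  rw [op1_Zg, cz2]
  exact diagonal_commute _ _

lemma commute_op1_cz2 (P : Matrix (Fin 2) (Fin 2) ℂ) {q a b : ι} (ha : q ≠ a) (hb : q ≠ b) :
    Commute (op1 P q) (cz2 a b) :=
  commute_op1_diagonal P q fun s c => by
    rw [Function.update_of_ne ha.symm, Function.update_of_ne hb.symm]

lemma semiconjBy_cz2_op1_Xg {a b : ι} (h : a ≠ b) :
    SemiconjBy (cz2 a b) (op1 Xg b) (op1 Zg a * op1 Xg b) := by
  rw [SemiconjBy, mul_assoc, cz2, op1_Xg_mul_diagonal, ← mul_assoc, op1_Zg,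
    Matrix.diagonal_mul_diagonal]
  have hphase : ∀ x y : Fin 2, (if x = 1 ∧ y = 1 then (-1 : ℂ) else 1) =
      Zg x x * if x = 1 ∧ y + 1 = 1 then -1 else 1 := by
    intro x y
    fin_cases x <;> fin_cases y <;> simp [Zg]
  congr 2
  funext s
  simp only [Function.comp_apply, flipAt, Function.update_of_ne h, Function.update_self]
  exact hphase _ _

section ListProd

variable {M : Type*} [Monoid M] {a b : M}

lemma semiconjBy_ofFn_prod {n : ℕ} (f : Fin n → M) (i : Fin n)
    (hlt : ∀ k < i, Commute a (f k)) (hi : SemiconjBy (f i) b a)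
    (hgt : ∀ k, i < k → Commute b (f k)) :
    SemiconjBy (List.ofFn f).prod b a := by
  induction n with
  | zero => exact i.elim0
  | succ n ih =>
    rw [List.ofFn_succ, List.prod_cons]
    cases i using Fin.cases with
    | zero =>
      refine hi.mul_left (Commute.list_prod_left _ _ ?_)
      exact List.forall_mem_ofFn_iff.mpr fun k => (hgt k.succ (Fin.succ_pos k)).symm
    | succ i =>
      refine SemiconjBy.mul_left (hlt 0 (Fin.succ_pos i)).symm
        (ih (fun k => f k.succ) i (fun k hk => ?_) hi fun k hk => ?_)
      · exact hlt k.succ (Fin.succ_lt_succ_iff.mpr hk)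
      · exact hgt k.succ (Fin.succ_lt_succ_iff.mpr hk)

lemma semiconjBy_ofFn_reverse_prod {n : ℕ} (f : Fin n → M) (i : Fin n)
    (hgt : ∀ k, i < k → Commute a (f k)) (hi : SemiconjBy (f i) b a)
    (hlt : ∀ k < i, Commute b (f k)) :
    SemiconjBy (List.ofFn f).reverse.prod b a := by
  induction n with
  | zero => exact i.elim0
  | succ n ih =>
    rw [List.ofFn_succ_last, List.reverse_append, List.prod_append, List.reverse_singleton,
      List.prod_singleton]
    cases i using Fin.lastCases with
    | last =>
      refine hi.mul_left (Commute.list_prod_left _ _ ?_)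
      simpa only [List.mem_reverse, List.forall_mem_ofFn_iff] using
        fun k => (hlt k.castSucc (Fin.castSucc_lt_last k)).symm
    | cast i =>
      refine SemiconjBy.mul_left (hgt _ (Fin.castSucc_lt_last i)).symm
        (ih (fun k => f k.castSucc) i (fun k hk => ?_) hi fun k hk => ?_)
      · exact hgt k.castSucc (Fin.castSucc_lt_castSucc_iff.mpr hk)
      · exact hlt k.castSucc (Fin.castSucc_lt_castSucc_iff.mpr hk)

end ListProd

section Grid

variable {N D : ℕ} [NeZero N]

lemma commute_op1_Zg_UTtcPair {q : GIdx N D} {j : Fin D} (h : q.2 ≠ j.succ) :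
    Commute (op1 Zg q) (UTtcPair j) := by
  refine (Commute.list_prod_right _ _ ?_).mul_right (Commute.list_prod_right _ _ ?_)
    |>.mul_right (Commute.list_prod_right _ _ ?_) <;>
    refine List.forall_mem_ofFn_iff.mpr fun k => ?_
  · exact commute_op1_Zg_cz2 _ _ _
  · exact commute_op1_Zg_op1 Hg (ne_of_apply_ne Prod.snd h)
  · exact commute_op1_Zg_cz2 _ _ _

lemma commute_op1_Xg_UTtcPair {q : GIdx N D} {j : Fin D} (h₁ : q.2 ≠ j.castSucc)
    (h₂ : q.2 ≠ j.succ) : Commute (op1 Xg q) (UTtcPair j) := by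
  have hne₁ : ∀ k : Fin N, q ≠ (k, j.castSucc) := fun k => ne_of_apply_ne Prod.snd h₁
  have hne₂ : ∀ k : Fin N, q ≠ (k, j.succ) := fun k => ne_of_apply_ne Prod.snd h₂
  refine (Commute.list_prod_right _ _ ?_).mul_right (Commute.list_prod_right _ _ ?_)
    |>.mul_right (Commute.list_prod_right _ _ ?_) <;>
    refine List.forall_mem_ofFn_iff.mpr fun k => ?_
  · exact commute_op1_cz2 Xg (hne₂ k) (hne₂ (k + 1))
  · exact commute_op1_Xg_op1 Hg (hne₂ k)
  · exact commute_op1_cz2 Xg (hne₁ k) (hne₂ k)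

lemma semiconjBy_UTtcPair (i : Fin N) (j : Fin D) :
    SemiconjBy (UTtcPair j) (op1 Xg ((i, j.succ) : GIdx N D))
      (op1 Zg ((i, j.castSucc) : GIdx N D) * op1 Zg ((i, j.succ) : GIdx N D)) := by
  have hcol : ∀ k k' : Fin N, ((k, j.castSucc) : GIdx N D) ≠ (k', j.succ) :=
    fun _ _ => ne_of_apply_ne Prod.snd Fin.castSucc_lt_succ.ne
  have hrow : ∀ {k : Fin N} (c c' : Fin (D + 1)), i ≠ k → ((i, c) : GIdx N D) ≠ (k, c') :=
    fun _ _ hk => ne_of_apply_ne Prod.fst hk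
  have hT : Commute (TtcCol j.succ)
      (op1 Zg ((i, j.castSucc) : GIdx N D) * op1 Zg ((i, j.succ) : GIdx N D)) :=
    .symm <| .mul_left (Commute.list_prod_right _ _ <| List.forall_mem_ofFn_iff.mpr fun _ =>
      commute_op1_Zg_cz2 _ _ _) (Commute.list_prod_right _ _ <|
        List.forall_mem_ofFn_iff.mpr fun _ => commute_op1_Zg_cz2 _ _ _)
  have hH : SemiconjBy (List.ofFn fun k : Fin N => op1 Hg ((k, j.succ) : GIdx N D)).prod
      (op1 Zg ((i, j.castSucc) : GIdx N D) * op1 Xg ((i, j.succ) : GIdx N D))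
      (op1 Zg ((i, j.castSucc) : GIdx N D) * op1 Zg ((i, j.succ) : GIdx N D)) := by
    refine SemiconjBy.mul_right ?_ (semiconjBy_ofFn_prod _ i (fun k hk => ?_)
      (semiconjBy_op1_Hg _) fun k hk => ?_)
    · exact .symm <| Commute.list_prod_right _ _ <| List.forall_mem_ofFn_iff.mpr fun _ =>
        commute_op1_Zg_op1 Hg (hcol _ _)
    · exact commute_op1_Zg_op1 Hg (hrow _ _ hk.ne')
    · exact commute_op1_Xg_op1 Hg (hrow _ _ hk.ne)
  have hCZ : SemiconjBy (List.ofFn fun k : Fin N =>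
        cz2 ((k, j.castSucc) : GIdx N D) ((k, j.succ) : GIdx N D)).prod
      (op1 Xg ((i, j.succ) : GIdx N D))
      (op1 Zg ((i, j.castSucc) : GIdx N D) * op1 Xg ((i, j.succ) : GIdx N D)) := by
    refine semiconjBy_ofFn_prod _ i (fun k hk => ?_) (semiconjBy_cz2_op1_Xg (hcol i i))
      fun k hk => ?_
    · exact (commute_op1_Zg_cz2 _ _ _).mul_left
        (commute_op1_cz2 Xg (hrow _ _ hk.ne') (hrow _ _ hk.ne'))
    · exact commute_op1_cz2 Xg (hrow _ _ hk.ne) (hrow _ _ hk.ne)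
  exact (SemiconjBy.mul_left hT hH).mul_left hCZ

end Grid

theorem ghz_resource_state_stabilizers_general {N D : ℕ} [NeZero N]
    (i : Fin N) (j : Fin D) :
    (op1 Zg ((i, j.castSucc) : GIdx N D) * op1 Zg ((i, j.succ) : GIdx N D)).mulVec
        (ghzResourceState N D) = ghzResourceState N D := by
  have hcircuit := semiconjBy_ofFn_reverse_prod (fun k => UTtcPair (N := N) (D := D) k) j
    (fun k hk =>
      have hk' : j.succ < k.succ := Fin.succ_lt_succ_iff.mpr hk
      (commute_op1_Zg_UTtcPair (Fin.castSucc_lt_succ.trans hk').ne).mul_left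
        (commute_op1_Zg_UTtcPair hk'.ne))
    (semiconjBy_UTtcPair i j) fun k hk =>
      have hk' : k.succ < j.succ := Fin.succ_lt_succ_iff.mpr hk
      commute_op1_Xg_UTtcPair (Fin.castSucc_lt_succ.trans hk').ne' hk'.ne'
  rw [ghzResourceState, Matrix.mulVec_mulVec, ← hcircuit.eq, ← Matrix.mulVec_mulVec,
    op1_Xg_mulVec_ketPlusAll]

/-- the resource state built from `U_{T̃_c}` is a +1 eigenvector of
`Z_i^{(j)} Z_i^{(j+1)}` for all rows `i` and columns `j = 1,…,D`. -/
theorem ghz_resource_state_stabilizers {N D : ℕ} [NeZero N] (hN : 3 ≤ N) (hD : 1 ≤ D)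
    (i : Fin N) (j : Fin D) :
    (op1 Zg ((i, j.castSucc) : GIdx N D) * op1 Zg ((i, j.succ) : GIdx N D)).mulVec
        (ghzResourceState N D) = ghzResourceState N D :=
  ghz_resource_state_stabilizers_general i j

end QCA

end
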